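/- arXiv:2310.08239 — 2 statements merged into one kernel-verified Lean document; each statement's English description precedes it below -/
import Mathlib

section
/- Let Hₙ be a real symmetric centrosymmetric positive definite matrix of size (n+1)×(n+1), and H_{n+1} a real symmetric centrosymmetric positive definite matrix of size (n+2)×(n+2). Let C₁, C₂ be real (n+1)×(n+1) matrices with C₁ ⇌ C₂ and D₁, D₂ real (n+2)×(n+1) matrices with D₁ ⇌ D₂. Define A_i = Hₙ^{1/2} · D_iᵀ · (H_{n+1}^{1/2})⁻¹ and B_i = (Hₙ^{1/2})⁻¹ · C_i · Hₙ^{1/2} for i = 1, 2, where M^{1/2} denotes the unique symmetric positive semidefinite square root of M. Then A₁ ⇌ A₂ and B₁ ⇌ B₂; equivalently, the block-diagonal matrices diag(A₁, A₂) and diag(B₁, B₂) are centrosymmetric. -/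
open Matrix

/-- `X ⇌ Y`: each of `X`, `Y` is the reverse of the other, i.e.
`xᵢⱼ = y_{m-i, n-j}` for all `i`, `j` (indices starting at `0`). -/
def ReverseRel {m n : ℕ} (X Y : Matrix (Fin m) (Fin n) ℝ) : Prop :=
  ∀ i j, X i j = Y i.rev j.rev

/-- A real matrix `X` is centrosymmetric if `xᵢⱼ = x_{m-i, n-j}` for all `i`, `j`. -/
def Centrosymmetric {m n : ℕ} (X : Matrix (Fin m) (Fin n) ℝ) : Prop :=
  ∀ i j, X i j = X i.rev j.rev

open scoped ComplexOrder in
/-- The positive semidefinite square root, as `Matrix.PosSemidef.sqrt` was defined in the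
older Mathlib (removed since). -/
noncomputable def Matrix.PosSemidef.sqrt {n : Type*} [Fintype n] [DecidableEq n] {𝕜 : Type*}
    [RCLike 𝕜] {A : Matrix n n 𝕜} (hA : A.PosSemidef) : Matrix n n 𝕜 :=
  hA.1.eigenvectorUnitary.1 * diagonal ((↑) ∘ (√·) ∘ hA.1.eigenvalues) *
  (star hA.1.eigenvectorUnitary : Matrix n n 𝕜)

/-!
Write `X ↦ X^rev` for the reversal `(X^rev)ᵢⱼ = x_{m-i, n-j}`, i.e. `X ↦ J X J` with `J` the
exchange matrix. Reversal is compatible with products, transposes and inverses, so it suffices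
that the square root of a centrosymmetric positive semidefinite matrix `H` is centrosymmetric:
its reversal is again positive semidefinite with square `H^rev = H`, hence it is the square root
of `H` by uniqueness.
-/

lemma reverseRel_iff_eq_submatrix {m n : ℕ} {X Y : Matrix (Fin m) (Fin n) ℝ} :
    ReverseRel X Y ↔ X = Y.submatrix Fin.rev Fin.rev :=
  ⟨Matrix.ext, fun h i j => by rw [h]; rfl⟩

namespace ReverseRel

variable {l m n : ℕ}

lemma transpose {X Y : Matrix (Fin m) (Fin n) ℝ} (h : ReverseRel X Y) : ReverseRel Xᵀ Yᵀ :=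
  fun i j => h j i

lemma mul {X₁ X₂ : Matrix (Fin l) (Fin m) ℝ} {Y₁ Y₂ : Matrix (Fin m) (Fin n) ℝ}
    (hX : ReverseRel X₁ X₂) (hY : ReverseRel Y₁ Y₂) : ReverseRel (X₁ * Y₁) (X₂ * Y₂) := by
  rw [reverseRel_iff_eq_submatrix] at hX hY ⊢
  rw [hX, hY]
  exact submatrix_mul_equiv X₂ Y₂ _ Fin.revPerm _

lemma inv {X Y : Matrix (Fin m) (Fin m) ℝ} (h : ReverseRel X Y) : ReverseRel X⁻¹ Y⁻¹ := by
  rw [reverseRel_iff_eq_submatrix] at h ⊢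
  rw [h]
  exact inv_submatrix_equiv Y Fin.revPerm Fin.revPerm

end ReverseRel

section sqrt

open scoped MatrixOrder

variable {ι : Type*} [Fintype ι] [DecidableEq ι]

lemma Matrix.PosSemidef.sqrt_eq_cfcSqrt {A : Matrix ι ι ℝ} (hA : A.PosSemidef) :
    hA.sqrt = CFC.sqrt A := by
  rw [CFC.sqrt_eq_cfc, cfc_nnreal_eq_real _ A hA.nonneg, hA.1.cfc_eq]
  simp only [IsHermitian.cfc, Matrix.PosSemidef.sqrt, Unitary.conjStarAlgAut_apply]
  congr 2
  funext i
  congr 2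
  funext j
  simp [max_eq_left (hA.eigenvalues_nonneg j)]

lemma Matrix.PosSemidef.sqrt_submatrix_eq_self {A : Matrix ι ι ℝ} (hA : A.PosSemidef)
    (e : ι ≃ ι) (he : A.submatrix e e = A) : hA.sqrt.submatrix e e = hA.sqrt := by
  rw [hA.sqrt_eq_cfcSqrt]
  refine (CFC.sqrt_unique ?_ ((CFC.sqrt_nonneg A).posSemidef.submatrix e).nonneg).symm
  rw [submatrix_mul_equiv, CFC.sqrt_mul_sqrt_self A hA.nonneg, he]

end sqrt

lemma Centrosymmetric.sqrt {m : ℕ} {H : Matrix (Fin m) (Fin m) ℝ} (hc : Centrosymmetric H)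
    (hH : H.PosSemidef) : Centrosymmetric hH.sqrt :=
  reverseRel_iff_eq_submatrix.mpr
    (hH.sqrt_submatrix_eq_self Fin.revPerm (reverseRel_iff_eq_submatrix.mp hc).symm).symm

theorem orthonormal_three_term_coefficients_reverseRel_general (n : ℕ)
    (Hn : Matrix (Fin (n + 1)) (Fin (n + 1)) ℝ)
    (Hn1 : Matrix (Fin (n + 2)) (Fin (n + 2)) ℝ)
    (hHnpd : Hn.PosDef) (hHnc : Centrosymmetric Hn)
    (hHn1pd : Hn1.PosDef) (hHn1c : Centrosymmetric Hn1)
    (C₁ C₂ : Matrix (Fin (n + 1)) (Fin (n + 1)) ℝ) (hC : ReverseRel C₁ C₂)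
    (D₁ D₂ : Matrix (Fin (n + 2)) (Fin (n + 1)) ℝ) (hD : ReverseRel D₁ D₂) :
    ReverseRel
        (hHnpd.posSemidef.sqrt * D₁ᵀ * (hHn1pd.posSemidef.sqrt)⁻¹)
        (hHnpd.posSemidef.sqrt * D₂ᵀ * (hHn1pd.posSemidef.sqrt)⁻¹) ∧
      ReverseRel
        ((hHnpd.posSemidef.sqrt)⁻¹ * C₁ * hHnpd.posSemidef.sqrt)
        ((hHnpd.posSemidef.sqrt)⁻¹ * C₂ * hHnpd.posSemidef.sqrt) := by
  have hS : ReverseRel hHnpd.posSemidef.sqrt hHnpd.posSemidef.sqrt :=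
    hHnc.sqrt hHnpd.posSemidef
  have hT : ReverseRel hHn1pd.posSemidef.sqrt hHn1pd.posSemidef.sqrt :=
    hHn1c.sqrt hHn1pd.posSemidef
  exact ⟨(hS.mul hD.transpose).mul hT.inv, (hS.inv.mul hC).mul hS⟩

/-- Let `Hₙ` and `H_{n+1}` be symmetric centrosymmetric positive definite matrices (of
sizes `n+1` and `n+2`), `C₁ ⇌ C₂` square of size `n+1` and `D₁ ⇌ D₂` of size
`(n+2) × (n+1)`.  With `Aᵢ = Hₙ^(1/2) Dᵢᵀ (H_{n+1}^(1/2))⁻¹` and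
`Bᵢ = (Hₙ^(1/2))⁻¹ Cᵢ Hₙ^(1/2)` (`M^(1/2)` the positive semidefinite square root),
one has `A₁ ⇌ A₂` and `B₁ ⇌ B₂`. -/
theorem orthonormal_three_term_coefficients_reverseRel (n : ℕ)
    (Hn : Matrix (Fin (n + 1)) (Fin (n + 1)) ℝ)
    (Hn1 : Matrix (Fin (n + 2)) (Fin (n + 2)) ℝ)
    (hHnsym : Hn.IsSymm) (hHnpd : Hn.PosDef) (hHnc : Centrosymmetric Hn)
    (hHn1sym : Hn1.IsSymm) (hHn1pd : Hn1.PosDef) (hHn1c : Centrosymmetric Hn1)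
    (C₁ C₂ : Matrix (Fin (n + 1)) (Fin (n + 1)) ℝ) (hC : ReverseRel C₁ C₂)
    (D₁ D₂ : Matrix (Fin (n + 2)) (Fin (n + 1)) ℝ) (hD : ReverseRel D₁ D₂) :
    ReverseRel
        (hHnpd.posSemidef.sqrt * D₁ᵀ * (hHn1pd.posSemidef.sqrt)⁻¹)
        (hHnpd.posSemidef.sqrt * D₂ᵀ * (hHn1pd.posSemidef.sqrt)⁻¹) ∧
      ReverseRel
        ((hHnpd.posSemidef.sqrt)⁻¹ * C₁ * hHnpd.posSemidef.sqrt)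
        ((hHnpd.posSemidef.sqrt)⁻¹ * C₂ * hHnpd.posSemidef.sqrt) :=
  orthonormal_three_term_coefficients_reverseRel_general n Hn Hn1 hHnpd hHnc hHn1pd hHn1c C₁ C₂ hC
    D₁ D₂ hD
end

section
/- Fix n ≥ 2. Let Q₀,…,Qₙ, Q̃₀,…,Q̃ₙ, Q̃′₀,…,Q̃′_{n−1}, and Q̃″₀,…,Q̃″_{n−2} be families of polynomials in ℝ[x,y], each of which is a reflexive polynomial vector (σ(Qₖ) = Q_{n−k}, σ(Q̃ₖ) = Q̃_{n−k}, σ(Q̃′ₖ) = Q̃′_{n−1−k}, σ(Q̃″ₖ) = Q̃″_{n−2−k}). Suppose the combined family {Q̃′₀,…,Q̃′_{n−1}, Q̃″₀,…,Q̃″_{n−2}} is linearly independent over ℝ, and suppose there are real matrices R of size (n+1)×n and S of size (n+1)×(n−1) such that Qₖ = Q̃ₖ + Σ_{j=0}^{n−1} R_{kj} Q̃′ⱼ + Σ_{j=0}^{n−2} S_{kj} Q̃″ⱼ for every k = 0,…,n. Then R and S are centrosymmetric matrices. -/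
open MvPolynomial

/-- The ℝ-algebra automorphism of `ℝ[x,y]` interchanging the two variables. -/
noncomputable def swapVars : MvPolynomial (Fin 2) ℝ →ₐ[ℝ] MvPolynomial (Fin 2) ℝ :=
  MvPolynomial.rename ⇑(Equiv.swap (0 : Fin 2) 1)

/-!
Apply `σ` to the connection formula for `Qₖ`: by reflexivity of all the vectors it becomes a
connection formula for `Q_{n-k}` whose coefficients are those of row `k` read backwards. Comparing
with the given formula for `Q_{n-k}`, the linear independence of `{Q̃′, Q̃″}` identifies the
coefficients, i.e. `R_{n-k, n-1-j} = R_{kj}` and `S_{n-k, n-2-j} = S_{kj}`.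
-/

theorem connection_coeff_equivariant {K M ι κ : Type*} [Semiring K] [AddCancelCommMonoid M]
    [Module K M] [Fintype ι] (σ : M →ₗ[K] M) (e : ι ≃ ι) (τ : κ → κ) {v : ι → M} {P Q : κ → M}
    (c : κ → ι → K) (hv : ∀ i, σ (v i) = v (e i)) (hP : ∀ k, σ (P k) = P (τ k))
    (hQ : ∀ k, σ (Q k) = Q (τ k)) (hli : LinearIndependent K v)
    (hconn : ∀ k, Q k = P k + ∑ i, c k i • v i) (k : κ) (i : ι) :
    c (τ k) (e i) = c k i := by
  have hsum : ∑ i, c k (e.symm i) • v i = ∑ i, c (τ k) i • v i := by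
    have h := congrArg σ (hconn k)
    rw [hQ, hconn (τ k), map_add, hP, map_sum] at h
    simp only [map_smul, hv] at h
    rw [← e.sum_comp (fun i => c k (e.symm i) • v i)]
    simpa using (add_left_cancel h).symm
  simpa using (Fintype.linearIndependent_iffₛ.mp hli _ _ hsum (e i)).symm

/-- Christoffel connection formula for `n = m + 2 ≥ 2`.  If `Q` (size `n+1`), `Q̃`
(size `n+1`), `Q̃′` (size `n`) and `Q̃″` (size `n-1`) are reflexive polynomial vectors,
`{Q̃′, Q̃″}` is linearly independent, and
`Qₖ = Q̃ₖ + Σⱼ Rₖⱼ Q̃′ⱼ + Σⱼ Sₖⱼ Q̃″ⱼ`, then `R` and `S` are centrosymmetric. -/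
theorem christoffel_connection_matrices_centrosymmetric (m : ℕ)
    (Q Qt : Fin (m + 3) → MvPolynomial (Fin 2) ℝ)
    (Qt' : Fin (m + 2) → MvPolynomial (Fin 2) ℝ)
    (Qt'' : Fin (m + 1) → MvPolynomial (Fin 2) ℝ)
    (hQ : ∀ k, swapVars (Q k) = Q k.rev)
    (hQt : ∀ k, swapVars (Qt k) = Qt k.rev)
    (hQt' : ∀ k, swapVars (Qt' k) = Qt' k.rev)
    (hQt'' : ∀ k, swapVars (Qt'' k) = Qt'' k.rev)
    (hli : LinearIndependent ℝ (Sum.elim Qt' Qt''))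
    (R : Matrix (Fin (m + 3)) (Fin (m + 2)) ℝ)
    (S : Matrix (Fin (m + 3)) (Fin (m + 1)) ℝ)
    (hconn : ∀ k : Fin (m + 3),
      Q k = Qt k + ∑ j, R k j • Qt' j + ∑ j, S k j • Qt'' j) :
    Centrosymmetric R ∧ Centrosymmetric S := by
  have key := connection_coeff_equivariant swapVars.toLinearMap
    (Equiv.sumCongr Fin.revPerm Fin.revPerm) Fin.rev (fun k => Sum.elim (R k) (S k))
    (by rintro (j | j) <;> simp [hQt', hQt'']) hQt hQ hli
    (fun k => by simp [Fintype.sum_sum_type, hconn k, add_assoc])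
  exact ⟨fun i j => by simpa using (key i (.inl j)).symm,
    fun i j => by simpa using (key i (.inr j)).symm⟩
end
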